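/- arXiv:2502.20085 — 3 statements merged into one kernel-verified Lean document; each statement's English description precedes it below -/
import Mathlib

section
/- Let y be a Gaussian random variable with mean 0 and variance δ² > 0, and let s = Σ_{i=0}^{m} i · 1_{C_i < y ≤ C_{i+1}} be its quantized observation with thresholds -∞ = C_0 < C_1 < ... < C_m < C_{m+1} = ∞. Then E[s·y] = (δ/√(2π)) · Σ_{i=1}^{m} exp(-C_i²/(2δ²)). -/
/-!
For increasing thresholds, `s(y)` is the number of thresholds below `y`, so
`s·y = ∑ᵢ 1{y > Cᵢ}·y`. The Gaussian density satisfies `φ' = -(x/v)·φ`, hence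
`∫_{c}^{∞} x φ(x) dx = v·φ(c)`, which for `v = δ²` is `(δ/√(2π))·exp(-c²/(2δ²))`.
-/

open MeasureTheory ProbabilityTheory Real

/-- The quantizer with thresholds `C 1 < C 2 < ... < C m` (and `C 0 = -∞`,
`C (m+1) = +∞` by convention): `quantize m C x = i` iff `C i < x ≤ C (i+1)`. -/
noncomputable def quantize (m : ℕ) (C : ℕ → ℝ) (x : ℝ) : ℕ :=
  ∑ i ∈ Finset.range (m + 1),
    i * (if (i = 0 ∨ C i < x) ∧ (i = m ∨ x ≤ C (i + 1)) then 1 else 0)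

open Filter Finset
open scoped NNReal Topology

theorem sum_range_mul_ite_add_eq_card_filter (p : ℕ → Prop) [DecidablePred p]
    (hp : ∀ i, p (i + 1) → p i) (n : ℕ) :
    ∑ i ∈ range n, i * (if p i ∧ ¬p (i + 1) then 1 else 0) + n * (if p n then 1 else 0)
      = #{i ∈ Icc 1 n | p i} := by
  induction n with
  | zero => simp
  | succ n ih =>
    rw [sum_range_succ, ← insert_Icc_right_eq_Icc_add_one (by omega), filter_insert]
    by_cases h : p (n + 1)
    · rw [if_pos h, if_pos h, card_insert_of_notMem (by simp), ← ih]
      simp only [mul_ite, mul_one, mul_zero, hp n h, h, not_true_eq_false, and_false, ↓reduceIte,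
        add_zero]
      ring
    · rw [if_neg h, if_neg h, ← ih]
      simp [h]

theorem quantize_eq_card {m : ℕ} {C : ℕ → ℝ}
    (hC : ∀ i j, 1 ≤ i → i < j → j ≤ m → C i < C j) (x : ℝ) :
    quantize m C x = #{i ∈ Icc 1 m | C i < x} := by
  -- the cell condition of `quantize` at `i` is `p i ∧ ¬p (i + 1)`
  set p : ℕ → Prop := fun i ↦ (i = 0 ∨ C i < x) ∧ i ≤ m
  have hp : ∀ i, p (i + 1) → p i := by
    rintro (_ | i) ⟨h | h, hi⟩
    · simp [p]
    · simp [p]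
    · omega
    · exact ⟨Or.inr ((hC _ _ (by omega) (by omega) hi).trans h), by omega⟩
  have key := sum_range_mul_ite_add_eq_card_filter p hp (m + 1)
  simp only [p, show ¬ m + 1 ≤ m by omega, and_false, if_false, mul_zero, add_zero] at key
  rw [quantize]
  convert key using 1
  · refine sum_congr rfl fun i hi ↦ ?_
    have him : i ≤ m := Nat.lt_succ_iff.mp (mem_range.mp hi)
    refine congrArg (i * ·) (if_congr ?_ rfl rfl)
    grind
  · congr 1
    ext i
    simp only [mem_filter, mem_Icc]
    grind

theorem hasDerivAt_gaussianPDFReal (μ : ℝ) (v : ℝ≥0) (x : ℝ) :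
    HasDerivAt (gaussianPDFReal μ v) (-((x - μ) / v) * gaussianPDFReal μ v x) x := by
  have h : HasDerivAt (fun y : ℝ ↦ -(y - μ) ^ 2 / (2 * v)) (-((x - μ) / v)) x :=
    ((((hasDerivAt_id' x).sub_const μ).pow 2).neg.div_const (2 * (v : ℝ))).congr_deriv
      (by norm_num; ring)
  exact (h.exp.const_mul _).congr_deriv (by rw [gaussianPDFReal]; ring)

theorem tendsto_gaussianPDFReal_atTop (μ : ℝ) {v : ℝ≥0} (hv : v ≠ 0) :
    Tendsto (gaussianPDFReal μ v) atTop (𝓝 0) := by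
  have hv' : (0 : ℝ) < 2 * v := by positivity
  have h : Tendsto (fun x : ℝ ↦ -(x - μ) ^ 2 / (2 * v)) atTop atBot := by
    refine (tendsto_neg_atTop_atBot.comp ?_).atBot_div_const hv'
    exact (tendsto_pow_atTop two_ne_zero).comp (tendsto_atTop_add_const_right _ _ tendsto_id)
  simpa [gaussianPDFReal_def] using (tendsto_exp_atBot.comp h).const_mul (√(2 * π * v))⁻¹

theorem integrable_sub_const_gaussianReal (μ c : ℝ) (v : ℝ≥0) :
    Integrable (fun x ↦ x - c) (gaussianReal μ v) :=
  ((memLp_id_gaussianReal 1).integrable le_rfl).sub (integrable_const c)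

theorem integrable_sub_mul_gaussianPDFReal (μ : ℝ) {v : ℝ≥0} (hv : v ≠ 0) :
    Integrable (fun x ↦ (x - μ) * gaussianPDFReal μ v x) := by
  have h := integrable_sub_const_gaussianReal μ μ v
  rw [gaussianReal_of_var_ne_zero μ hv, integrable_withDensity_iff_integrable_smul'
    (measurable_gaussianPDF μ v) (ae_of_all _ fun _ ↦ gaussianPDF_lt_top)] at h
  simpa [toReal_gaussianPDF, mul_comm] using h

theorem integral_Ioi_sub_mul_gaussianPDFReal (μ : ℝ) {v : ℝ≥0} (hv : v ≠ 0) (c : ℝ) :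
    ∫ x in Set.Ioi c, (x - μ) * gaussianPDFReal μ v x = v * gaussianPDFReal μ v c := by
  have hv' : (v : ℝ) ≠ 0 := NNReal.coe_ne_zero.mpr hv
  have hderiv : ∀ x ∈ Set.Ici c, HasDerivAt (fun x ↦ -(v * gaussianPDFReal μ v x))
      ((x - μ) * gaussianPDFReal μ v x) x := fun x _ ↦
    ((hasDerivAt_gaussianPDFReal μ v x).const_mul (v : ℝ)).neg.congr_deriv (by field_simp)
  have hlim : Tendsto (fun x ↦ -(v * gaussianPDFReal μ v x)) atTop (𝓝 0) := by
    simpa using ((tendsto_gaussianPDFReal_atTop μ hv).const_mul (v : ℝ)).neg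
  rw [integral_Ioi_of_hasDerivAt_of_tendsto' hderiv
    (integrable_sub_mul_gaussianPDFReal μ hv).integrableOn hlim]
  ring

theorem integral_indicator_Ioi_sub_gaussianReal (μ : ℝ) {v : ℝ≥0} (hv : v ≠ 0) (c : ℝ) :
    ∫ x, (Set.Ioi c).indicator (fun x ↦ x - μ) x ∂gaussianReal μ v
      = v * gaussianPDFReal μ v c := by
  rw [integral_gaussianReal_eq_integral_smul hv, ← integral_Ioi_sub_mul_gaussianPDFReal μ hv c,
    ← integral_indicator measurableSet_Ioi]
  congr 1 with x
  by_cases hx : x ∈ Set.Ioi c <;> simp [hx, mul_comm]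

theorem toNNReal_sq_mul_gaussianPDFReal {δ : ℝ} (hδ : 0 ≤ δ) (c : ℝ) :
    ((δ ^ 2).toNNReal : ℝ) * gaussianPDFReal 0 (δ ^ 2).toNNReal c
      = δ / √(2 * π) * rexp (-c ^ 2 / (2 * δ ^ 2)) := by
  rw [gaussianPDFReal, Real.coe_toNNReal _ (sq_nonneg δ), sub_zero, sqrt_mul (by positivity),
    sqrt_sq hδ]
  field_simp

theorem stmt_1_general (m : ℕ) (C : ℕ → ℝ)
    (hC : ∀ i j, 1 ≤ i → i < j → j ≤ m → C i < C j)
    (δ : ℝ) (hδ : 0 < δ) :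
    ∫ x, (quantize m C x : ℝ) * x ∂(gaussianReal 0 (Real.toNNReal (δ ^ 2)))
      = δ / Real.sqrt (2 * π)
        * ∑ i ∈ Finset.Icc 1 m, Real.exp (-(C i) ^ 2 / (2 * δ ^ 2)) := by
  have hv : (δ ^ 2).toNNReal ≠ 0 := by simpa using hδ.ne'
  have hsplit : ∀ x, (quantize m C x : ℝ) * x
      = ∑ i ∈ Icc 1 m, (Set.Ioi (C i)).indicator (fun x ↦ x - 0) x := by
    intro x
    rw [quantize_eq_card hC, natCast_card_filter, sum_mul]
    refine sum_congr rfl fun i _ ↦ ?_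
    by_cases h : C i < x <;> simp [h]
  simp_rw [hsplit]
  rw [integral_finsetSum _ fun i _ ↦
    (integrable_sub_const_gaussianReal 0 0 _).indicator measurableSet_Ioi, mul_sum]
  refine sum_congr rfl fun i _ ↦ ?_
  rw [integral_indicator_Ioi_sub_gaussianReal 0 hv, toNNReal_sq_mul_gaussianPDFReal hδ.le]

/-- If `y ~ N(0, δ²)` and `s = Q(y)` is its quantized observation, then
`E[s·y] = (δ/√(2π)) · Σ_{i=1}^m exp(-C_i²/(2δ²))`. -/
theorem stmt_1 (m : ℕ) (hm : 1 ≤ m) (C : ℕ → ℝ)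
    (hC : ∀ i j, 1 ≤ i → i < j → j ≤ m → C i < C j)
    (δ : ℝ) (hδ : 0 < δ) :
    ∫ x, (quantize m C x : ℝ) * x ∂(gaussianReal 0 (Real.toNNReal (δ ^ 2)))
      = δ / Real.sqrt (2 * π)
        * ∑ i ∈ Finset.Icc 1 m, Real.exp (-(C i) ^ 2 / (2 * δ ^ 2)) :=
  stmt_1_general m C hC δ hδ
end

section
/- Let 0 = F_0 < F_1 < F_2 < ... < F_m < F_{m+1} = 1 and set F̃_i = F_{i+1} - F_i and f̃_i = f_{i+1} - f_i for given reals f_0 = 0 = f_{m+1} and f_1,...,f_m. Let Ũ = diag(f̃_0,...,f̃_{m-1}), W̃ = diag(F̃_0,...,F̃_{m-1}), w̃ = (F̃_0,...,F̃_{m-1})^T. Then 1_m^T Ũ (W̃ - w̃ w̃^T)^{-1} Ũ 1_m = Σ_{i=0}^{m} f̃_i² / F̃_i. -/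
open Matrix

/-- With `0 = F 0 < F 1 < ... < F m < F (m+1) = 1`, `f 0 = f (m+1) = 0`,
`F̃ i = F (i+1) - F i`, `f̃ i = f (i+1) - f i`, `Ũ = diag(f̃)`, `W̃ = diag(F̃)`,
`w̃ = (F̃ 0, ..., F̃ (m-1))ᵀ`, one has
`1ᵀ Ũ (W̃ - w̃w̃ᵀ)⁻¹ Ũ 1 = Σ_{i=0}^{m} f̃ i ² / F̃ i`. -/
theorem stmt_5 (m : ℕ) (F f : ℕ → ℝ)
    (hF0 : F 0 = 0) (hF1 : F (m + 1) = 1)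
    (hmono : ∀ i, i ≤ m → F i < F (i + 1))
    (hf0 : f 0 = 0) (hfm : f (m + 1) = 0) :
    (fun _ : Fin m => (1 : ℝ)) ⬝ᵥ
      ((Matrix.diagonal (fun i : Fin m => f ((i : ℕ) + 1) - f (i : ℕ)) *
        (Matrix.diagonal (fun i : Fin m => F ((i : ℕ) + 1) - F (i : ℕ))
          - Matrix.vecMulVec (fun i : Fin m => F ((i : ℕ) + 1) - F (i : ℕ))
              (fun i : Fin m => F ((i : ℕ) + 1) - F (i : ℕ)))⁻¹ *
        Matrix.diagonal (fun i : Fin m => f ((i : ℕ) + 1) - f (i : ℕ))).mulVec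
        (fun _ : Fin m => (1 : ℝ)))
      = ∑ i ∈ Finset.range (m + 1), (f (i + 1) - f i) ^ 2 / (F (i + 1) - F i) := by
  set a : Fin m → ℝ := fun i : Fin m => F ((i : ℕ) + 1) - F (i : ℕ) with ha
  set b : Fin m → ℝ := fun i : Fin m => f ((i : ℕ) + 1) - f (i : ℕ) with hb
  have hapos : ∀ i : Fin m, 0 < a i := fun i => sub_pos.mpr (hmono i (le_of_lt i.isLt))
  have ham : 0 < F (m + 1) - F m := sub_pos.mpr (hmono m le_rfl)
  set c : ℝ := (F (m + 1) - F m)⁻¹ with hc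
  have hsa : ∑ i : Fin m, a i = F m := by
    simp only [ha]
    exact (Fin.sum_univ_eq_sum_range (fun n => F (n + 1) - F n) m).trans
      (by rw [Finset.sum_range_sub, hF0, sub_zero])
  have hsb : ∑ i : Fin m, b i = f m := by
    simp only [hb]
    exact (Fin.sum_univ_eq_sum_range (fun n => f (n + 1) - f n) m).trans
      (by rw [Finset.sum_range_sub, hf0, sub_zero])
  set B : Matrix (Fin m) (Fin m) ℝ :=
    Matrix.of (fun i j => (if i = j then (a i)⁻¹ else 0) + c) with hB
  have hDB : (Matrix.diagonal a - Matrix.vecMulVec a a) * B = 1 := by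
    ext i j
    simp only [hB, Matrix.mul_apply, Matrix.sub_apply, Matrix.diagonal_apply,
      Matrix.vecMulVec_apply, Matrix.of_apply, Matrix.one_apply, sub_mul, mul_add,
      ite_mul, mul_ite, zero_mul, mul_zero, Finset.sum_sub_distrib, Finset.sum_add_distrib,
      Finset.sum_ite_eq, Finset.sum_ite_eq', Finset.mem_univ, if_true, ← Finset.mul_sum,
      ← Finset.sum_mul, hsa]
    have haj : a j ≠ 0 := (hapos j).ne'
    have h1 : (1 : ℝ) - F m ≠ 0 := by rw [← hF1]; exact ham.ne'
    split_ifs with h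
    · subst h; rw [hc, hF1]; field_simp; ring
    · rw [hc, hF1]; field_simp; ring
  rw [Matrix.inv_eq_right_inv hDB]
  simp only [Matrix.mulVec, dotProduct, Matrix.mul_apply, hB, Matrix.of_apply,
    Matrix.diagonal_apply, ite_mul, mul_ite, zero_mul, mul_zero, mul_one, one_mul,
    mul_add, add_mul, Finset.sum_add_distrib, Finset.sum_ite_eq, Finset.sum_ite_eq',
    Finset.mem_univ, if_true, ← Finset.mul_sum, ← Finset.sum_mul, hsb]
  rw [Finset.sum_range_succ, hfm]
  congr 1
  · exact (Fin.sum_univ_eq_sum_range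
        (fun n => (f (n + 1) - f n) * (F (n + 1) - F n)⁻¹ * (f (n + 1) - f n)) m).trans
      (Finset.sum_congr rfl fun i _ => by rw [pow_two, div_eq_mul_inv]; ring)
  · rw [hc, pow_two, div_eq_mul_inv]; ring
end

section
/- Let A(q) = 1 + a_1 q^{-1} + ... + a_{n_a} q^{-n_a} be a scalar polynomial with no zeros on or outside the unit circle (i.e., the system is stable) and B(q) = b_0 + b_1 q^{-1} + ... + b_{n_b} q^{-n_b} a vector polynomial with coefficients in ℝ^n, coprime with A. Write B(q)/A(q) = Σ_{i≥0} h_i q^{-i}. Then for any κ ≥ n_a + n_b, the block matrix Γ ∈ ℝ^{n(κ-n_b) × n_a} with block rows [h_{n_b+j-1}, h_{n_b+j-2}, ..., h_{n_b+j-n_a}] for j = 1, ..., κ - n_b has rank n_a. -/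
open Matrix Polynomial

private lemma sum_swap_guard (s t : Finset ℕ) (f : ℕ → ℝ) :
    (∑ p ∈ s, if p ∈ t then f p else 0) = ∑ p ∈ t, if p ∈ s then f p else 0 := by
  classical
  rw [Finset.sum_ite_mem, Finset.sum_ite_mem, Finset.inter_comm]

private lemma range_succ_eq_insert_Icc (m : ℕ) :
    Finset.range (m + 1) = insert 0 (Finset.Icc 1 m) := by
  ext p; simp [Nat.lt_succ_iff]; omega

/-- Full-rank property of the block Toeplitz matrix of impulse responses.
`A(q) = 1 + a 1 q⁻¹ + ... + a nₐ q⁻ⁿᵃ` is stable (all roots of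
`z^{nₐ} + a 1 z^{nₐ-1} + ... + a nₐ` lie strictly inside the unit circle),
`B(q) = b 0 + ... + b n_b q⁻ⁿᵇ` is an `ℝⁿ`-valued polynomial coprime with `A`
(as polynomials in `q⁻¹`), `a nₐ ≠ 0`, `b n_b ≠ 0`, and the impulse response
`h` satisfies `h i + Σ_{j=1}^{nₐ} a j • h (i-j) = b i` for `i ≤ n_b` and `= 0`
for `i > n_b` (with `h i = 0` for negative indices). Then for any `κ ≥ nₐ + n_b`
the matrix `Γ` with block rows `[h (n_b+j-1), ..., h (n_b+j-nₐ)]`,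
`j = 1, ..., κ - n_b`, has rank `nₐ`. -/
theorem stmt_8 (n na nb κ : ℕ) (hna : 0 < na) (hκ : na + nb ≤ κ)
    (a : ℕ → ℝ) (ha0 : a 0 = 1) (hana : a na ≠ 0)
    (b : ℕ → Fin n → ℝ) (hbnb : b nb ≠ 0)
    (hstable : ∀ z : ℂ,
      (∑ j ∈ Finset.range (na + 1), Polynomial.C ((a j : ℂ)) * Polynomial.X ^ (na - j)).IsRoot z
        → ‖z‖ < 1)
    (hcoprime : ∀ dpol : Polynomial ℝ,
      dpol ∣ (∑ j ∈ Finset.range (na + 1), Polynomial.C (a j) * Polynomial.X ^ j) →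
      (∀ i : Fin n, dpol ∣ (∑ j ∈ Finset.range (nb + 1), Polynomial.C (b j i) * Polynomial.X ^ j)) →
      IsUnit dpol)
    (h : ℕ → Fin n → ℝ)
    (hrec : ∀ i : ℕ,
      h i + ∑ j ∈ Finset.Icc 1 na, (if j ≤ i then a j • h (i - j) else 0)
        = if i ≤ nb then b i else 0) :
    (Matrix.of fun (p : Fin (κ - nb) × Fin n) (c : Fin na) =>
        if (c : ℕ) ≤ nb + (p.1 : ℕ) then h (nb + (p.1 : ℕ) - (c : ℕ)) p.2 else 0).rank
      = na := by
  classical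
  set M : Matrix (Fin (κ - nb) × Fin n) (Fin na) ℝ :=
    Matrix.of fun (p : Fin (κ - nb) × Fin n) (c : Fin na) =>
        if (c : ℕ) ≤ nb + (p.1 : ℕ) then h (nb + (p.1 : ℕ) - (c : ℕ)) p.2 else 0 with hM
  -- reduce to injectivity of mulVecLin
  suffices hker : ∀ x : Fin na → ℝ, M.mulVec x = 0 → x = 0 by
    have hinj : Function.Injective M.mulVecLin := by
      rw [← LinearMap.ker_eq_bot, LinearMap.ker_eq_bot']
      intro x hx
      exact hker x hx
    rw [Matrix.rank, LinearMap.finrank_range_of_inj hinj, Module.finrank_fin_fun]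
  intro x hx
  -- the scalar recursion, reindexed over `range (na+1)`
  have hrec' : ∀ (k : ℕ) (i : Fin n),
      (∑ p ∈ Finset.range (na + 1), if p ≤ k then a p * h (k - p) i else 0)
        = if k ≤ nb then b k i else 0 := by
    intro k i
    have e := congrFun (hrec k) i
    simp only [Pi.add_apply, Finset.sum_apply, Pi.smul_apply, smul_eq_mul] at e
    rw [range_succ_eq_insert_Icc na, Finset.sum_insert (by simp)]
    simp only [Nat.zero_le, if_true, ha0, one_mul, Nat.sub_zero]
    rw [show (∑ p ∈ Finset.Icc 1 na, if p ≤ k then a p * h (k - p) i else 0)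
        = ∑ p ∈ Finset.Icc 1 na, (if p ≤ k then a p • h (k - p) else 0) i by
      refine Finset.sum_congr rfl fun p _ => ?_
      by_cases hp : p ≤ k <;> simp [hp]]
    rw [← Finset.sum_apply, ← Pi.add_apply, hrec k]
    by_cases hk : k ≤ nb <;> simp [hk]
  -- the coefficients of x as a function on ℕ
  set x' : ℕ → ℝ := fun c => if hc : c < na then x ⟨c, hc⟩ else 0 with hx'
  -- the partial convolution
  set gg : ℕ → Fin n → ℝ :=
    fun k i => ∑ c ∈ Finset.range na, if c ≤ k then x' c * h (k - c) i else 0 with hgg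
  -- vanishing of gg for nb ≤ k < κ, from hx
  have hvan1 : ∀ k, nb ≤ k → k < κ → ∀ i, gg k i = 0 := by
    intro k hk1 hk2 i
    have hj : k - nb < κ - nb := by omega
    have := congrFun hx (⟨k - nb, hj⟩, i)
    rw [Matrix.mulVec, Pi.zero_apply] at this
    simp only [dotProduct, hM, Matrix.of_apply] at this
    show (∑ c ∈ Finset.range na, if c ≤ k then x' c * h (k - c) i else 0) = 0
    rw [show (∑ c ∈ Finset.range na, if c ≤ k then x' c * h (k - c) i else 0)
        = ∑ c : Fin na, if (c : ℕ) ≤ k then x' (c : ℕ) * h (k - (c : ℕ)) i else 0 from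
      (Fin.sum_univ_eq_sum_range (fun c => if c ≤ k then x' c * h (k - c) i else 0) na).symm]
    refine Eq.trans (Finset.sum_congr rfl fun c _ => ?_) this
    have hc : (c : ℕ) < na := c.isLt
    have hnbk : nb + (k - nb) = k := by omega
    simp only [hnbk]
    by_cases hck : (c : ℕ) ≤ k <;> simp [hck, hx', hc, mul_comm]
  -- vanishing of gg for all k ≥ nb
  have hvan : ∀ k, nb ≤ k → ∀ i, gg k i = 0 := by
    intro k
    induction k using Nat.strong_induction_on with
    | _ k IH =>
      intro hk i
      rcases lt_or_ge k κ with hkκ | hkκ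
      · exact hvan1 k hk hkκ i
      -- k ≥ κ ≥ na + nb
      have hkna : na ≤ k := by omega
      have h1 : (∑ c ∈ Finset.range na, ∑ p ∈ Finset.range (na + 1),
          if p ≤ k - c then x' c * (a p * h (k - c - p) i) else 0) = 0 := by
        refine Finset.sum_eq_zero fun c hc => ?_
        rw [Finset.mem_range] at hc
        have : (∑ p ∈ Finset.range (na + 1),
            if p ≤ k - c then x' c * (a p * h (k - c - p) i) else 0)
            = x' c * ∑ p ∈ Finset.range (na + 1),
              if p ≤ k - c then a p * h (k - c - p) i else 0 := by
          rw [Finset.mul_sum]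
          refine Finset.sum_congr rfl fun p _ => ?_
          by_cases hp : p ≤ k - c <;> simp [hp]
        rw [this, hrec' (k - c) i, if_neg (by omega), mul_zero]
      rw [Finset.sum_comm] at h1
      have h2 : (∑ p ∈ Finset.range (na + 1), ∑ c ∈ Finset.range na,
          if p ≤ k - c then x' c * (a p * h (k - c - p) i) else 0)
          = ∑ p ∈ Finset.range (na + 1), a p * gg (k - p) i := by
        refine Finset.sum_congr rfl fun p hp => ?_
        rw [Finset.mem_range, Nat.lt_succ_iff] at hp
        rw [hgg, Finset.mul_sum]
        refine Finset.sum_congr rfl fun c hc => ?_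
        rw [Finset.mem_range] at hc
        have hiff : (p ≤ k - c) ↔ (c ≤ k - p) := by omega
        have heq : k - c - p = k - p - c := by omega
        by_cases hpc : p ≤ k - c
        · rw [if_pos hpc, if_pos (hiff.mp hpc), heq]; ring
        · rw [if_neg hpc, if_neg (fun hcp => hpc (hiff.mpr hcp)), mul_zero]
      rw [h2, Finset.sum_range_succ', ha0, Nat.sub_zero, one_mul] at h1
      have h3 : (∑ p ∈ Finset.range na, a (p + 1) * gg (k - (p + 1)) i) = 0 := by
        refine Finset.sum_eq_zero fun p hp => ?_
        rw [Finset.mem_range] at hp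
        rw [IH (k - (p + 1)) (by omega) (by omega) i, mul_zero]
      rw [h3, zero_add] at h1
      exact h1
  -- polynomials
  set Apol : Polynomial ℝ := ∑ j ∈ Finset.range (na + 1), Polynomial.C (a j) * Polynomial.X ^ j
    with hApol
  set Bpol : Fin n → Polynomial ℝ :=
    fun i => ∑ j ∈ Finset.range (nb + 1), Polynomial.C (b j i) * Polynomial.X ^ j with hBpol
  set Xpol : Polynomial ℝ := ∑ c ∈ Finset.range na, Polynomial.C (x' c) * Polynomial.X ^ c
    with hXpol
  set Gpol : Fin n → Polynomial ℝ :=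
    fun i => ∑ k ∈ Finset.range nb, Polynomial.C (gg k i) * Polynomial.X ^ k with hGpol
  have coeffA : ∀ k, Apol.coeff k = if k ≤ na then a k else 0 := by
    intro k
    simp [hApol, Polynomial.finset_sum_coeff, Polynomial.coeff_C_mul, Polynomial.coeff_X_pow,
      Finset.sum_ite_eq' (Finset.range (na + 1)), Nat.lt_succ_iff]
  have coeffB : ∀ i k, (Bpol i).coeff k = if k ≤ nb then b k i else 0 := by
    intro i k
    simp [hBpol, Polynomial.finset_sum_coeff, Polynomial.coeff_C_mul, Polynomial.coeff_X_pow,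
      Finset.sum_ite_eq' (Finset.range (nb + 1)), Nat.lt_succ_iff]
  have coeffX : ∀ k, Xpol.coeff k = x' k := by
    intro k
    simp only [hXpol, Polynomial.finset_sum_coeff, Polynomial.coeff_C_mul,
      Polynomial.coeff_X_pow, mul_ite, mul_one, mul_zero]
    rw [Finset.sum_ite_eq (Finset.range na)]
    by_cases hk : k < na
    · simp [hk]
    · simp [hk, hx', dif_neg hk]
  set Hpow : Fin n → PowerSeries ℝ := fun i => PowerSeries.mk (fun k => h k i) with hHpow
  -- A * H = B as power series
  have hAH : ∀ i, (Apol : PowerSeries ℝ) * Hpow i = (Bpol i : PowerSeries ℝ) := by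
    intro i
    ext k
    rw [PowerSeries.coeff_mul, Finset.Nat.sum_antidiagonal_eq_sum_range_succ_mk]
    simp only [Polynomial.coeff_coe, hHpow, PowerSeries.coeff_mk, coeffA]
    rw [coeffB, ← hrec' k i]
    have e1 : (∑ p ∈ Finset.range (k + 1), (if p ≤ na then a p else 0) * h (k - p) i)
        = ∑ p ∈ Finset.range (k + 1),
            if p ∈ Finset.range (na + 1) then a p * h (k - p) i else 0 := by
      refine Finset.sum_congr rfl fun p _ => ?_
      by_cases hp : p ≤ na <;> simp [hp, Finset.mem_range, Nat.lt_succ_iff]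
    rw [e1, sum_swap_guard]
    refine Finset.sum_congr rfl fun p _ => ?_
    by_cases hp : p ≤ k <;> simp [hp, Finset.mem_range, Nat.lt_succ_iff]
  -- X * H = G as power series
  have hXH : ∀ i, (Xpol : PowerSeries ℝ) * Hpow i = (Gpol i : PowerSeries ℝ) := by
    intro i
    ext k
    rw [PowerSeries.coeff_mul, Finset.Nat.sum_antidiagonal_eq_sum_range_succ_mk]
    simp only [Polynomial.coeff_coe, hHpow, PowerSeries.coeff_mk, coeffX]
    have coeffG : (Gpol i).coeff k = gg k i := by
      simp only [hGpol, Polynomial.finset_sum_coeff, Polynomial.coeff_C_mul,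
        Polynomial.coeff_X_pow, mul_ite, mul_one, mul_zero]
      rw [Finset.sum_ite_eq (Finset.range nb)]
      by_cases hk : k < nb
      · simp [hk]
      · rw [if_neg (by simpa using hk)]
        exact (hvan k (by omega) i).symm
    rw [coeffG]
    show _ = ∑ c ∈ Finset.range na, if c ≤ k then x' c * h (k - c) i else 0
    have e1 : (∑ p ∈ Finset.range (k + 1), x' p * h (k - p) i)
        = ∑ p ∈ Finset.range (k + 1),
            if p ∈ Finset.range na then x' p * h (k - p) i else 0 := by
      refine Finset.sum_congr rfl fun p _ => ?_
      by_cases hp : p < na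
      · simp [hp]
      · simp [hp, hx', dif_neg hp]
    rw [e1, sum_swap_guard]
    refine Finset.sum_congr rfl fun p _ => ?_
    by_cases hp : p ≤ k <;> simp [hp, Finset.mem_range, Nat.lt_succ_iff]
  -- key polynomial identity
  have hkey : ∀ i, Apol * Gpol i = Xpol * Bpol i := by
    intro i
    rw [← Polynomial.coe_inj, Polynomial.coe_mul, Polynomial.coe_mul, ← hXH i, ← hAH i]
    ring
  -- now suppose x ≠ 0 and derive a contradiction
  by_contra hx0
  have hXne : Xpol ≠ 0 := by
    obtain ⟨c, hc⟩ := Function.ne_iff.mp hx0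
    intro hX
    apply hc
    have h2 : x' (c : ℕ) = 0 := by rw [← coeffX (c : ℕ), hX, Polynomial.coeff_zero]
    simpa [hx', c.isLt] using h2
  have hAne : Apol ≠ 0 := by
    intro hA
    have := coeffA na
    rw [hA, Polynomial.coeff_zero, if_pos le_rfl] at this
    exact hana this.symm
  set g : Polynomial ℝ := GCDMonoid.gcd Apol Xpol with hgdef
  have hg0 : g ≠ 0 := gcd_ne_zero_of_left hAne
  have hAe : g * (Apol / g) = Apol := EuclideanDomain.mul_div_cancel' hg0 (gcd_dvd_left _ _)
  have hXe : g * (Xpol / g) = Xpol := EuclideanDomain.mul_div_cancel' hg0 (gcd_dvd_right _ _)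
  have hcop : IsCoprime (Apol / g) (Xpol / g) := isCoprime_div_gcd_div_gcd hXne
  have hdvdB : ∀ i, (Apol / g) ∣ Bpol i := by
    intro i
    refine hcop.dvd_of_dvd_mul_left ⟨Gpol i, ?_⟩
    apply mul_left_cancel₀ hg0
    rw [← mul_assoc, hXe, ← mul_assoc, hAe]
    exact (hkey i).symm
  have hunit : IsUnit (Apol / g) := by
    refine hcoprime (Apol / g) ⟨g, ?_⟩ hdvdB
    exact ((mul_comm _ _).trans hAe).symm
  have hdegA : Apol.natDegree = na := by
    apply le_antisymm
    · rw [Polynomial.natDegree_le_iff_coeff_eq_zero]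
      intro m hm
      rw [coeffA m, if_neg (by omega)]
    · exact Polynomial.le_natDegree_of_ne_zero (by rw [coeffA na, if_pos le_rfl]; exact hana)
  have hdegX : Xpol.natDegree ≤ na - 1 := by
    rw [Polynomial.natDegree_le_iff_coeff_eq_zero]
    intro m hm
    have hmna : ¬ m < na := by omega
    rw [coeffX m]
    simp only [hx']
    rw [dif_neg hmna]
  have hdegg : g.natDegree = na := by
    have h1 : (Apol / g) ≠ 0 := fun hz => hAne (by rw [← hAe, hz, mul_zero])
    have := Polynomial.natDegree_mul hg0 h1
    rw [hAe, hdegA, Polynomial.natDegree_eq_zero_of_isUnit hunit, add_zero] at this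
    exact this.symm
  have hle : g.natDegree ≤ Xpol.natDegree :=
    Polynomial.natDegree_le_of_dvd (gcd_dvd_right _ _) hXne
  omega
end
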